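/- arXiv:1610.04797 — 7 statements merged into one kernel-verified Lean document; each statement's English description precedes it below -/
import Mathlib

section
/- Let A be an associative unital ℚ-algebra and let (J0, Jp, Jm, P) be an osp(1,2)-realization in A. In A ⊗ A, the coproduct elements satisfy ΔJ0*ΔJp - ΔJp*ΔJ0 = ΔJp and ΔJ0*ΔJm - ΔJm*ΔJ0 = -ΔJm. -/
open scoped TensorProduct

/-- The coproduct elements of an `osp(1,2)`-realization satisfy
`[ΔJ0, ΔJp] = ΔJp` and `[ΔJ0, ΔJm] = -ΔJm` in `A ⊗[ℚ] A`. -/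
theorem coproduct_commutators {A : Type*} [Ring A] [Algebra ℚ A]
    (J0 Jp Jm P : A)
    (h1 : J0*Jp - Jp*J0 = Jp)
    (h2 : J0*Jm - Jm*J0 = -Jm)
    (h3 : Jp*Jm + Jm*Jp = 2*J0)
    (h4 : J0*P = P*J0)
    (h5 : Jp*P + P*Jp = 0)
    (h6 : Jm*P + P*Jm = 0)
    (h7 : P^2 = 1) :
    let ΔJ0 : A ⊗[ℚ] A := J0 ⊗ₜ 1 + 1 ⊗ₜ J0
    let ΔJp : A ⊗[ℚ] A := Jp ⊗ₜ P + 1 ⊗ₜ Jp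
    let ΔJm : A ⊗[ℚ] A := Jm ⊗ₜ P + 1 ⊗ₜ Jm
    ΔJ0*ΔJp - ΔJp*ΔJ0 = ΔJp ∧ ΔJ0*ΔJm - ΔJm*ΔJ0 = -ΔJm := by
  intro ΔJ0 ΔJp ΔJm
  constructor
  · show (J0 ⊗ₜ 1 + 1 ⊗ₜ J0) * (Jp ⊗ₜ P + 1 ⊗ₜ Jp) - (Jp ⊗ₜ P + 1 ⊗ₜ Jp) * (J0 ⊗ₜ 1 + 1 ⊗ₜ J0) = Jp ⊗ₜ P + 1 ⊗ₜ Jp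
    conv_rhs => rw [show Jp ⊗ₜ[ℚ] P + 1 ⊗ₜ[ℚ] Jp
        = (J0*Jp - Jp*J0) ⊗ₜ[ℚ] P + 1 ⊗ₜ[ℚ] (J0*Jp - Jp*J0) from by rw [h1]]
    simp only [mul_add, add_mul, Algebra.TensorProduct.tmul_mul_tmul, one_mul, mul_one, h4]
    simp only [TensorProduct.sub_tmul, TensorProduct.tmul_sub]
    abel
  · show (J0 ⊗ₜ 1 + 1 ⊗ₜ J0) * (Jm ⊗ₜ P + 1 ⊗ₜ Jm) - (Jm ⊗ₜ P + 1 ⊗ₜ Jm) * (J0 ⊗ₜ 1 + 1 ⊗ₜ J0) = -(Jm ⊗ₜ P + 1 ⊗ₜ Jm)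
    conv_rhs => rw [show -(Jm ⊗ₜ[ℚ] P + 1 ⊗ₜ[ℚ] Jm)
        = (J0*Jm - Jm*J0) ⊗ₜ[ℚ] P + 1 ⊗ₜ[ℚ] (J0*Jm - Jm*J0) from by
          rw [h2]; simp [TensorProduct.neg_tmul, TensorProduct.tmul_neg, neg_add]; abel]
    simp only [mul_add, add_mul, Algebra.TensorProduct.tmul_mul_tmul, one_mul, mul_one, h4]
    simp only [TensorProduct.sub_tmul, TensorProduct.tmul_sub]
    abel
end

section
/- Let A be an associative unital ℚ-algebra and let (J0, Jp, Jm, P) be an osp(1,2)-realization in A. In the triple tensor product A ⊗ A ⊗ A over ℚ, the threefold coproduct elements J0' = J0⊗1⊗1 + 1⊗J0⊗1 + 1⊗1⊗J0, Jp' = Jp⊗P⊗P + 1⊗Jp⊗P + 1⊗1⊗Jp, Jm' = Jm⊗P⊗P + 1⊗Jm⊗P + 1⊗1⊗Jm, P' = P⊗P⊗P form an osp(1,2)-realization in A ⊗ A ⊗ A, i.e. they satisfy all seven osp(1,2) relations. -/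
open scoped TensorProduct

/-!
`P` is a parity operator: `J0` commutes with it and `J±` anticommute with it. The twofold
coproduct `J ⊗ P' + 1 ⊗ J'` of odd generators is the sign-twisted one of the super tensor product,
so in each relation the cross terms cancel because `J'±` anticommute with `P'` and `P'² = 1`.
The threefold coproduct is the twofold one applied twice, first in `A ⊗ A`, then in `A ⊗ (A ⊗ A)`.
-/

structure IsOsp12Realization {A : Type*} [Ring A] (J0 Jp Jm P : A) : Prop where
  J0_Jp_commutator : J0 * Jp - Jp * J0 = Jp
  J0_Jm_commutator : J0 * Jm - Jm * J0 = -Jm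
  Jp_Jm_anticommutator : Jp * Jm + Jm * Jp = 2 * J0
  J0_commute_P : J0 * P = P * J0
  Jp_P_anticommutator : Jp * P + P * Jp = 0
  Jm_P_anticommutator : Jm * P + P * Jm = 0
  P_sq : P ^ 2 = 1

namespace IsOsp12Realization

variable {A : Type*} [Ring A] {J0 Jp Jm P : A}

theorem J0_mul_Jp (h : IsOsp12Realization J0 Jp Jm P) : J0 * Jp = Jp + Jp * J0 :=
  eq_add_of_sub_eq h.J0_Jp_commutator

theorem J0_mul_Jm (h : IsOsp12Realization J0 Jp Jm P) : J0 * Jm = -Jm + Jm * J0 :=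
  eq_add_of_sub_eq h.J0_Jm_commutator

theorem Jp_mul_Jm (h : IsOsp12Realization J0 Jp Jm P) : Jp * Jm = 2 * J0 - Jm * Jp :=
  eq_sub_of_add_eq h.Jp_Jm_anticommutator

theorem Jp_mul_P (h : IsOsp12Realization J0 Jp Jm P) : Jp * P = -(P * Jp) :=
  eq_neg_of_add_eq_zero_left h.Jp_P_anticommutator

theorem Jm_mul_P (h : IsOsp12Realization J0 Jp Jm P) : Jm * P = -(P * Jm) :=
  eq_neg_of_add_eq_zero_left h.Jm_P_anticommutator

theorem P_mul_P (h : IsOsp12Realization J0 Jp Jm P) : P * P = 1 := by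
  rw [← sq, h.P_sq]

open Algebra.TensorProduct TensorProduct in
theorem coproduct {R B : Type*} [CommRing R] [Algebra R A] [Ring B] [Algebra R B]
    {J0' Jp' Jm' P' : B} (h : IsOsp12Realization J0 Jp Jm P)
    (h' : IsOsp12Realization J0' Jp' Jm' P') :
    IsOsp12Realization (J0 ⊗ₜ[R] (1 : B) + (1 : A) ⊗ₜ J0') (Jp ⊗ₜ P' + (1 : A) ⊗ₜ Jp')
      (Jm ⊗ₜ P' + (1 : A) ⊗ₜ Jm') (P ⊗ₜ P') := by
  constructor <;>
    simp only [sq, mul_add, add_mul, tmul_mul_tmul, one_mul, mul_one, two_mul,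
      h.J0_mul_Jp, h.J0_mul_Jm, h.Jp_mul_Jm, h.J0_commute_P, h.Jp_mul_P, h.Jm_mul_P, h.P_mul_P,
      h'.J0_mul_Jp, h'.J0_mul_Jm, h'.Jp_mul_Jm, h'.J0_commute_P, h'.Jp_mul_P, h'.Jm_mul_P, h'.P_mul_P,
      tmul_add, add_tmul, tmul_sub, sub_tmul, tmul_neg, neg_tmul, one_def] <;>
    abel

end IsOsp12Realization

/-- The threefold coproduct of an `osp(1,2)`-realization is an `osp(1,2)`-realization
in `A ⊗[ℚ] A ⊗[ℚ] A`. -/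
theorem threefold_coproduct_is_realization {A : Type*} [Ring A] [Algebra ℚ A]
    (J0 Jp Jm P : A)
    (h1 : J0*Jp - Jp*J0 = Jp)
    (h2 : J0*Jm - Jm*J0 = -Jm)
    (h3 : Jp*Jm + Jm*Jp = 2*J0)
    (h4 : J0*P = P*J0)
    (h5 : Jp*P + P*Jp = 0)
    (h6 : Jm*P + P*Jm = 0)
    (h7 : P^2 = 1) :
    let J0' : A ⊗[ℚ] (A ⊗[ℚ] A) :=
      J0 ⊗ₜ ((1:A) ⊗ₜ (1:A)) + (1:A) ⊗ₜ (J0 ⊗ₜ (1:A)) + (1:A) ⊗ₜ ((1:A) ⊗ₜ J0)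
    let Jp' : A ⊗[ℚ] (A ⊗[ℚ] A) := Jp ⊗ₜ (P ⊗ₜ P) + (1:A) ⊗ₜ (Jp ⊗ₜ P) + (1:A) ⊗ₜ ((1:A) ⊗ₜ Jp)
    let Jm' : A ⊗[ℚ] (A ⊗[ℚ] A) := Jm ⊗ₜ (P ⊗ₜ P) + (1:A) ⊗ₜ (Jm ⊗ₜ P) + (1:A) ⊗ₜ ((1:A) ⊗ₜ Jm)
    let P' : A ⊗[ℚ] (A ⊗[ℚ] A) := P ⊗ₜ (P ⊗ₜ P)
    J0'*Jp' - Jp'*J0' = Jp' ∧ J0'*Jm' - Jm'*J0' = -Jm' ∧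
    Jp'*Jm' + Jm'*Jp' = 2*J0' ∧ J0'*P' = P'*J0' ∧
    Jp'*P' + P'*Jp' = 0 ∧ Jm'*P' + P'*Jm' = 0 ∧ P'^2 = 1 := by
  have h : IsOsp12Realization J0 Jp Jm P := ⟨h1, h2, h3, h4, h5, h6, h7⟩
  have hAAA := h.coproduct (R := ℚ) (h.coproduct (R := ℚ) h)
  simp only [Algebra.TensorProduct.one_def, TensorProduct.tmul_add, ← add_assoc] at hAAA
  exact ⟨hAAA.1, hAAA.2, hAAA.3, hAAA.4, hAAA.5, hAAA.6, hAAA.7⟩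
end

section
/- Let A be an associative unital ℚ-algebra and let (J0, Jp, Jm, P) be an osp(1,2)-realization in A. In the triple tensor product A ⊗ A ⊗ A over ℚ, the elements associated with the subset {1,3} of {1,2,3}, namely J0'' = J0⊗1⊗1 + 1⊗1⊗J0, Jp'' = Jp⊗P⊗P + 1⊗1⊗Jp, Jm'' = Jm⊗P⊗P + 1⊗1⊗Jm, P'' = P⊗1⊗P, form an osp(1,2)-realization in A ⊗ A ⊗ A, i.e. they satisfy all seven osp(1,2) relations. -/
open scoped TensorProduct

/-!
The quadruple is a twisted coproduct. On the last two factors, `1 ⊗ (J0, Jp, Jm, P)` is a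
realization in `A ⊗ A`, and `P ⊗ P` is a parity for it: an involution commuting with the even
elements `1 ⊗ J0`, `1 ⊗ P` and anticommuting with the odd ones `1 ⊗ Jp`, `1 ⊗ Jm`. Pairing a
realization in `A` with a realization in `B` by `J0 ⊗ 1 + 1 ⊗ K0`, `J± ⊗ Γ + 1 ⊗ K±`, `P ⊗ Q`
gives a realization in `A ⊗ B` as soon as `Γ` is such a parity: the signs from moving `Γ` past
`K±` cancel the cross terms of `{Jp'', Jm''}`, and `Γ ^ 2 = 1` restores `{Jp, Jm} ⊗ 1`.
-/

structure IsOspRealization {A : Type*} [Ring A] (J0 Jp Jm P : A) : Prop where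
  lie_J0_Jp : J0 * Jp - Jp * J0 = Jp
  lie_J0_Jm : J0 * Jm - Jm * J0 = -Jm
  anticomm_Jp_Jm : Jp * Jm + Jm * Jp = 2 * J0
  comm_J0_P : J0 * P = P * J0
  anticomm_Jp_P : Jp * P + P * Jp = 0
  anticomm_Jm_P : Jm * P + P * Jm = 0
  sq_P : P ^ 2 = 1

structure IsOspParity {A : Type*} [Ring A] (J0 Jp Jm P Γ : A) : Prop where
  comm_J0 : J0 * Γ = Γ * J0
  comm_P : P * Γ = Γ * P
  anticomm_Jp : Jp * Γ + Γ * Jp = 0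
  anticomm_Jm : Jm * Γ + Γ * Jm = 0
  sq : Γ ^ 2 = 1

namespace IsOspParity

variable {A : Type*} [Ring A] {J0 Jp Jm P Γ : A}

theorem Jp_mul (h : IsOspParity J0 Jp Jm P Γ) : Jp * Γ = -(Γ * Jp) :=
  eq_neg_of_add_eq_zero_left h.anticomm_Jp

theorem Jm_mul (h : IsOspParity J0 Jp Jm P Γ) : Jm * Γ = -(Γ * Jm) :=
  eq_neg_of_add_eq_zero_left h.anticomm_Jm

theorem mul_self (h : IsOspParity J0 Jp Jm P Γ) : Γ * Γ = 1 := by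
  rw [← pow_two, h.sq]

end IsOspParity

namespace IsOspRealization

variable {A : Type*} [Ring A] {J0 Jp Jm P : A}

theorem J0_mul_Jp (h : IsOspRealization J0 Jp Jm P) : J0 * Jp = Jp + Jp * J0 :=
  sub_eq_iff_eq_add.mp h.lie_J0_Jp

theorem J0_mul_Jm (h : IsOspRealization J0 Jp Jm P) : J0 * Jm = -Jm + Jm * J0 :=
  sub_eq_iff_eq_add.mp h.lie_J0_Jm

theorem Jp_mul_Jm (h : IsOspRealization J0 Jp Jm P) : Jp * Jm = 2 * J0 - Jm * Jp :=
  eq_sub_of_add_eq h.anticomm_Jp_Jm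

theorem isOspParity (h : IsOspRealization J0 Jp Jm P) : IsOspParity J0 Jp Jm P P :=
  ⟨h.comm_J0_P, rfl, h.anticomm_Jp_P, h.anticomm_Jm_P, h.sq_P⟩

theorem map {B F : Type*} [Ring B] [FunLike F A B] [RingHomClass F A B]
    (h : IsOspRealization J0 Jp Jm P) (f : F) :
    IsOspRealization (f J0) (f Jp) (f Jm) (f P) where
  lie_J0_Jp := by simpa using congrArg f h.lie_J0_Jp
  lie_J0_Jm := by simpa using congrArg f h.lie_J0_Jm
  anticomm_Jp_Jm := by simpa [two_mul] using congrArg f h.anticomm_Jp_Jm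
  comm_J0_P := by simpa using congrArg f h.comm_J0_P
  anticomm_Jp_P := by simpa using congrArg f h.anticomm_Jp_P
  anticomm_Jm_P := by simpa using congrArg f h.anticomm_Jm_P
  sq_P := by simpa using congrArg f h.sq_P

end IsOspRealization

section TensorProduct

open TensorProduct Algebra.TensorProduct

variable {R A B : Type*} [CommRing R] [Ring A] [Ring B] [Algebra R A] [Algebra R B]

theorem IsOspParity.one_tmul {K0 Kp Km Q Γ : B} (hΓ : IsOspParity K0 Kp Km Q Γ) {q : A}
    (hq : q ^ 2 = 1) :
    IsOspParity (1 ⊗ₜ[R] K0 : A ⊗[R] B) (1 ⊗ₜ Kp) (1 ⊗ₜ Km) (1 ⊗ₜ Q) (q ⊗ₜ Γ) where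
  comm_J0 := by simp only [tmul_mul_tmul, one_mul, mul_one, hΓ.comm_J0]
  comm_P := by simp only [tmul_mul_tmul, one_mul, mul_one, hΓ.comm_P]
  anticomm_Jp := by
    simp only [tmul_mul_tmul, one_mul, mul_one, ← tmul_add, hΓ.anticomm_Jp, tmul_zero]
  anticomm_Jm := by
    simp only [tmul_mul_tmul, one_mul, mul_one, ← tmul_add, hΓ.anticomm_Jm, tmul_zero]
  sq := by rw [pow_two, tmul_mul_tmul, ← pow_two, ← pow_two, hq, hΓ.sq, one_def]

theorem IsOspRealization.coproduct {J0 Jp Jm P : A} {K0 Kp Km Q Γ : B}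
    (hA : IsOspRealization J0 Jp Jm P) (hB : IsOspRealization K0 Kp Km Q)
    (hΓ : IsOspParity K0 Kp Km Q Γ) :
    IsOspRealization (J0 ⊗ₜ[R] 1 + 1 ⊗ₜ K0) (Jp ⊗ₜ Γ + 1 ⊗ₜ Kp) (Jm ⊗ₜ Γ + 1 ⊗ₜ Km)
      (P ⊗ₜ Q) := by
  have hP := hA.isOspParity
  have hQ := hB.isOspParity
  constructor <;>
    simp only [pow_two, mul_add, add_mul, tmul_mul_tmul, one_mul, mul_one, two_mul,
      hA.J0_mul_Jp, hA.J0_mul_Jm, hA.Jp_mul_Jm, hP.Jp_mul, hP.Jm_mul, hP.mul_self, hP.comm_J0,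
      hB.J0_mul_Jp, hB.J0_mul_Jm, hB.Jp_mul_Jm, hQ.Jp_mul, hQ.Jm_mul, hQ.mul_self, hQ.comm_J0,
      hΓ.Jp_mul, hΓ.Jm_mul, hΓ.mul_self, hΓ.comm_J0, hΓ.comm_P,
      tmul_add, add_tmul, tmul_sub, sub_tmul, tmul_neg, neg_tmul] <;>
    abel

end TensorProduct

/-- The elements associated with the subset `{1,3}` of `{1,2,3}` form an
`osp(1,2)`-realization in `A ⊗[ℚ] A ⊗[ℚ] A`. -/
theorem subset_13_is_realization {A : Type*} [Ring A] [Algebra ℚ A]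
    (J0 Jp Jm P : A)
    (h1 : J0*Jp - Jp*J0 = Jp)
    (h2 : J0*Jm - Jm*J0 = -Jm)
    (h3 : Jp*Jm + Jm*Jp = 2*J0)
    (h4 : J0*P = P*J0)
    (h5 : Jp*P + P*Jp = 0)
    (h6 : Jm*P + P*Jm = 0)
    (h7 : P^2 = 1) :
    let J0'' : A ⊗[ℚ] (A ⊗[ℚ] A) := J0 ⊗ₜ ((1:A) ⊗ₜ (1:A)) + (1:A) ⊗ₜ ((1:A) ⊗ₜ J0)
    let Jp'' : A ⊗[ℚ] (A ⊗[ℚ] A) := Jp ⊗ₜ (P ⊗ₜ P) + (1:A) ⊗ₜ ((1:A) ⊗ₜ Jp)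
    let Jm'' : A ⊗[ℚ] (A ⊗[ℚ] A) := Jm ⊗ₜ (P ⊗ₜ P) + (1:A) ⊗ₜ ((1:A) ⊗ₜ Jm)
    let P'' : A ⊗[ℚ] (A ⊗[ℚ] A) := P ⊗ₜ ((1:A) ⊗ₜ P)
    J0''*Jp'' - Jp''*J0'' = Jp'' ∧ J0''*Jm'' - Jm''*J0'' = -Jm'' ∧
    Jp''*Jm'' + Jm''*Jp'' = 2*J0'' ∧ J0''*P'' = P''*J0'' ∧
    Jp''*P'' + P''*Jp'' = 0 ∧ Jm''*P'' + P''*Jm'' = 0 ∧ P''^2 = 1 := by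
  have hA : IsOspRealization J0 Jp Jm P := ⟨h1, h2, h3, h4, h5, h6, h7⟩
  have hAA : IsOspRealization (1 ⊗ₜ[ℚ] J0 : A ⊗[ℚ] A) (1 ⊗ₜ Jp) (1 ⊗ₜ Jm) (1 ⊗ₜ P) :=
    hA.map (Algebra.TensorProduct.includeRight (R := ℚ) (A := A))
  have hΓ : IsOspParity (1 ⊗ₜ[ℚ] J0 : A ⊗[ℚ] A) (1 ⊗ₜ Jp) (1 ⊗ₜ Jm) (1 ⊗ₜ P) (P ⊗ₜ P) :=
    hA.isOspParity.one_tmul h7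
  obtain ⟨r1, r2, r3, r4, r5, r6, r7⟩ := hA.coproduct (R := ℚ) hAA hΓ
  exact ⟨r1, r2, r3, r4, r5, r6, r7⟩
end

section
/- Let A be an associative unital ℚ-algebra and let (J0, Jp, Jm, P) be an osp(1,2)-realization in A. In A ⊗ A, define the intermediate Casimir Γ12 = ΔJ0*ΔP - ΔJp*ΔJm*ΔP - (1/2)*ΔP, where ΔJ0 = J0⊗1 + 1⊗J0, ΔJp = Jp⊗P + 1⊗Jp, ΔJm = Jm⊗P + 1⊗Jm, ΔP = P⊗P. Then Γ12 commutes with each of ΔJ0, ΔJp, ΔJm and ΔP. -/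
open scoped TensorProduct

theorem osp_casimir {R : Type*} [Ring R] [Algebra ℚ R]
    (J0 Jp Jm P : R)
    (h1 : J0*Jp - Jp*J0 = Jp)
    (h2 : J0*Jm - Jm*J0 = -Jm)
    (h3 : Jp*Jm + Jm*Jp = 2*J0)
    (h4 : J0*P = P*J0)
    (h5 : Jp*P + P*Jp = 0)
    (h6 : Jm*P + P*Jm = 0)
    (h7 : P^2 = 1) :
    (J0*P - Jp*Jm*P - (1/2:ℚ)•P)*J0 = J0*(J0*P - Jp*Jm*P - (1/2:ℚ)•P) ∧
    (J0*P - Jp*Jm*P - (1/2:ℚ)•P)*Jp = Jp*(J0*P - Jp*Jm*P - (1/2:ℚ)•P) ∧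
    (J0*P - Jp*Jm*P - (1/2:ℚ)•P)*Jm = Jm*(J0*P - Jp*Jm*P - (1/2:ℚ)•P) ∧
    (J0*P - Jp*Jm*P - (1/2:ℚ)•P)*P = P*(J0*P - Jp*Jm*P - (1/2:ℚ)•P) := by
  have e1 : J0*Jp = Jp + Jp*J0 := eq_add_of_sub_eq h1
  have e2 : J0*Jm = -Jm + Jm*J0 := eq_add_of_sub_eq h2
  have e3 : Jm*Jp = 2*J0 - Jp*Jm := eq_sub_of_add_eq' h3
  have e4 : P*J0 = J0*P := h4.symm
  have e5 : P*Jp = -(Jp*P) := eq_neg_of_add_eq_zero_right h5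
  have e6 : P*Jm = -(Jm*P) := eq_neg_of_add_eq_zero_right h6
  have e7 : P*P = 1 := by rw [← sq]; exact h7
  have e1' : ∀ x : R, J0*(Jp*x) = Jp*x + Jp*(J0*x) := fun x => by
    rw [← mul_assoc, e1, add_mul, mul_assoc]
  have e2' : ∀ x : R, J0*(Jm*x) = -(Jm*x) + Jm*(J0*x) := fun x => by
    rw [← mul_assoc, e2, add_mul, neg_mul, mul_assoc]
  have e3' : ∀ x : R, Jm*(Jp*x) = 2*(J0*x) - Jp*(Jm*x) := fun x => by
    rw [← mul_assoc, e3, sub_mul, mul_assoc, mul_assoc]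
  have e4' : ∀ x : R, P*(J0*x) = J0*(P*x) := fun x => by
    rw [← mul_assoc, e4, mul_assoc]
  have e5' : ∀ x : R, P*(Jp*x) = -(Jp*(P*x)) := fun x => by
    rw [← mul_assoc, e5, neg_mul, mul_assoc]
  have e6' : ∀ x : R, P*(Jm*x) = -(Jm*(P*x)) := fun x => by
    rw [← mul_assoc, e6, neg_mul, mul_assoc]
  have e7' : ∀ x : R, P*(P*x) = x := fun x => by
    rw [← mul_assoc, e7, one_mul]
  refine ⟨?_, ?_, ?_, ?_⟩ <;>
  · simp only [sub_mul, mul_sub, add_mul, mul_add, smul_mul_assoc, mul_smul_comm,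
      mul_assoc, e1, e2, e3, e4, e5, e6, e7, e1', e2', e3', e4', e5', e6', e7',
      mul_one, one_mul, mul_neg, neg_mul, neg_neg, smul_neg, two_mul]
    try module

/-- The intermediate Casimir `Γ12 = ΔJ0*ΔP - ΔJp*ΔJm*ΔP - (1/2)*ΔP` in `A ⊗[ℚ] A`
commutes with each of the coproduct elements `ΔJ0, ΔJp, ΔJm, ΔP`. -/
theorem intermediate_casimir_commutes {A : Type*} [Ring A] [Algebra ℚ A]
    (J0 Jp Jm P : A)
    (h1 : J0*Jp - Jp*J0 = Jp)
    (h2 : J0*Jm - Jm*J0 = -Jm)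
    (h3 : Jp*Jm + Jm*Jp = 2*J0)
    (h4 : J0*P = P*J0)
    (h5 : Jp*P + P*Jp = 0)
    (h6 : Jm*P + P*Jm = 0)
    (h7 : P^2 = 1) :
    let ΔJ0 : A ⊗[ℚ] A := J0 ⊗ₜ 1 + 1 ⊗ₜ J0
    let ΔJp : A ⊗[ℚ] A := Jp ⊗ₜ P + 1 ⊗ₜ Jp
    let ΔJm : A ⊗[ℚ] A := Jm ⊗ₜ P + 1 ⊗ₜ Jm
    let ΔP : A ⊗[ℚ] A := P ⊗ₜ P
    let Γ12 : A ⊗[ℚ] A := ΔJ0*ΔP - ΔJp*ΔJm*ΔP - (1/2 : ℚ) • ΔP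
    Γ12*ΔJ0 = ΔJ0*Γ12 ∧ Γ12*ΔJp = ΔJp*Γ12 ∧ Γ12*ΔJm = ΔJm*Γ12 ∧ Γ12*ΔP = ΔP*Γ12 := by
  intro ΔJ0 ΔJp ΔJm ΔP Γ12
  have e1 : J0*Jp = Jp + Jp*J0 := eq_add_of_sub_eq h1
  have e2 : J0*Jm = -Jm + Jm*J0 := eq_add_of_sub_eq h2
  have e3 : Jm*Jp = 2*J0 - Jp*Jm := eq_sub_of_add_eq' h3
  have e4 : P*J0 = J0*P := h4.symm
  have e5 : P*Jp = -(Jp*P) := eq_neg_of_add_eq_zero_right h5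
  have e6 : P*Jm = -(Jm*P) := eq_neg_of_add_eq_zero_right h6
  have e7 : P*P = 1 := by rw [← sq]; exact h7
  have H1 : ΔJ0*ΔJp - ΔJp*ΔJ0 = ΔJp := by
    simp only [ΔJ0, ΔJp, add_mul, mul_add, Algebra.TensorProduct.tmul_mul_tmul,
      e1, e2, e3, e4, e5, e6, e7, mul_one, one_mul, TensorProduct.add_tmul, TensorProduct.tmul_add, TensorProduct.neg_tmul,
      TensorProduct.tmul_neg, TensorProduct.sub_tmul, TensorProduct.tmul_sub, TensorProduct.tmul_smul, two_mul]
    abel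
  have H2 : ΔJ0*ΔJm - ΔJm*ΔJ0 = -ΔJm := by
    simp only [ΔJ0, ΔJm, add_mul, mul_add, Algebra.TensorProduct.tmul_mul_tmul,
      e1, e2, e3, e4, e5, e6, e7, mul_one, one_mul, TensorProduct.add_tmul, TensorProduct.tmul_add, TensorProduct.neg_tmul,
      TensorProduct.tmul_neg, TensorProduct.sub_tmul, TensorProduct.tmul_sub, TensorProduct.tmul_smul, two_mul, neg_add]
    abel
  have H3 : ΔJp*ΔJm + ΔJm*ΔJp = 2*ΔJ0 := by
    simp only [ΔJ0, ΔJp, ΔJm, add_mul, mul_add, Algebra.TensorProduct.tmul_mul_tmul,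
      e1, e2, e3, e4, e5, e6, e7, mul_one, one_mul, TensorProduct.add_tmul, TensorProduct.tmul_add, TensorProduct.neg_tmul,
      TensorProduct.tmul_neg, TensorProduct.sub_tmul, TensorProduct.tmul_sub, TensorProduct.tmul_smul, two_mul]
    abel
  have H4 : ΔJ0*ΔP = ΔP*ΔJ0 := by
    simp only [ΔJ0, ΔP, add_mul, mul_add, Algebra.TensorProduct.tmul_mul_tmul,
      e4, e7, mul_one, one_mul]
  have H5 : ΔJp*ΔP + ΔP*ΔJp = 0 := by
    simp only [ΔJp, ΔP, add_mul, mul_add, Algebra.TensorProduct.tmul_mul_tmul,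
      e5, e7, mul_one, one_mul, TensorProduct.neg_tmul, TensorProduct.tmul_neg]
    abel
  have H6 : ΔJm*ΔP + ΔP*ΔJm = 0 := by
    simp only [ΔJm, ΔP, add_mul, mul_add, Algebra.TensorProduct.tmul_mul_tmul,
      e6, e7, mul_one, one_mul, TensorProduct.neg_tmul, TensorProduct.tmul_neg]
    abel
  have H7 : ΔP^2 = 1 := by
    simp only [ΔP, sq, Algebra.TensorProduct.tmul_mul_tmul, e7,
      Algebra.TensorProduct.one_def]
  exact osp_casimir ΔJ0 ΔJp ΔJm ΔP H1 H2 H3 H4 H5 H6 H7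
end

section
/- Let A be an associative unital ℚ-algebra, let (J0, Jp, Jm, P) be an osp(1,2)-realization in A, and let Γ = J0*P - Jp*Jm*P - (1/2)*P be its Casimir element. In A ⊗ A, the intermediate Casimir Γ12 = ΔJ0*ΔP - ΔJp*ΔJm*ΔP - (1/2)*ΔP commutes with both Γ⊗1 and 1⊗Γ. -/
open scoped TensorProduct

private lemma osp_casimir_central {A : Type*} [Ring A] [Algebra ℚ A]
    (J0 Jp Jm P : A)
    (h1 : J0*Jp - Jp*J0 = Jp)
    (h2 : J0*Jm - Jm*J0 = -Jm)
    (h3 : Jp*Jm + Jm*Jp = 2*J0)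
    (h4 : J0*P = P*J0)
    (h5 : Jp*P + P*Jp = 0)
    (h6 : Jm*P + P*Jm = 0)
    (h7 : P^2 = 1) :
    (J0*P - Jp*Jm*P - (1/2 : ℚ) • P) * Jp = Jp * (J0*P - Jp*Jm*P - (1/2 : ℚ) • P)
    ∧ (J0*P - Jp*Jm*P - (1/2 : ℚ) • P) * Jm = Jm * (J0*P - Jp*Jm*P - (1/2 : ℚ) • P)
    ∧ (J0*P - Jp*Jm*P - (1/2 : ℚ) • P) * J0 = J0 * (J0*P - Jp*Jm*P - (1/2 : ℚ) • P)
    ∧ (J0*P - Jp*Jm*P - (1/2 : ℚ) • P) * P = P * (J0*P - Jp*Jm*P - (1/2 : ℚ) • P) := by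
  have hPJ0 : ∀ x : A, P*(J0*x) = J0*(P*x) := fun x => by
    rw [← mul_assoc, ← h4, mul_assoc]
  have hPJp : ∀ x : A, P*(Jp*x) = -(Jp*(P*x)) := fun x => by
    rw [← mul_assoc, ← mul_assoc, ← neg_mul]
    congr 1; linear_combination (norm := noncomm_ring) h5
  have hPJm : ∀ x : A, P*(Jm*x) = -(Jm*(P*x)) := fun x => by
    rw [← mul_assoc, ← mul_assoc, ← neg_mul]
    congr 1; linear_combination (norm := noncomm_ring) h6
  have hJ0Jp : ∀ x : A, J0*(Jp*x) = Jp*(J0*x) + Jp*x := fun x => by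
    rw [← mul_assoc, ← mul_assoc, ← add_mul]
    congr 1; linear_combination (norm := noncomm_ring) h1
  have hJ0Jm : ∀ x : A, J0*(Jm*x) = Jm*(J0*x) - Jm*x := fun x => by
    rw [← mul_assoc, ← mul_assoc, ← sub_mul]
    congr 1; linear_combination (norm := noncomm_ring) h2
  have hJmJp : ∀ x : A, Jm*(Jp*x) = 2*(J0*x) - Jp*(Jm*x) := fun x => by
    rw [← mul_assoc, ← mul_assoc, ← mul_assoc, ← sub_mul]
    congr 1; linear_combination (norm := noncomm_ring) h3
  have hPP : ∀ x : A, P*(P*x) = x := fun x => by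
    rw [← mul_assoc, ← sq, h7, one_mul]
  have bPJ0 : P*J0 = J0*P := h4.symm
  have bPJp : P*Jp = -(Jp*P) := by linear_combination (norm := noncomm_ring) h5
  have bPJm : P*Jm = -(Jm*P) := by linear_combination (norm := noncomm_ring) h6
  have bJ0Jp : J0*Jp = Jp*J0 + Jp := by linear_combination (norm := noncomm_ring) h1
  have bJ0Jm : J0*Jm = Jm*J0 - Jm := by linear_combination (norm := noncomm_ring) h2
  have bJmJp : Jm*Jp = 2*J0 - Jp*Jm := by linear_combination (norm := noncomm_ring) h3
  refine ⟨?_, ?_, ?_, ?_⟩ <;>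
  · simp only [mul_assoc, mul_add, add_mul, mul_sub, sub_mul, mul_neg, neg_mul,
      smul_mul_assoc, mul_smul_comm, mul_one, hPJ0, hPJp, hPJm, hJ0Jp, hJ0Jm, hJmJp, hPP,
      bPJ0, bPJp, bPJm, bJ0Jp, bJ0Jm, bJmJp, h7]
    noncomm_ring
    try module

private lemma osp_aux_left {A : Type*} [Ring A] [Algebra ℚ A] {g x : A}
    (h : g*x = x*g) (y : A) :
    Commute (g ⊗ₜ[ℚ] (1:A)) (x ⊗ₜ[ℚ] y) := by
  unfold Commute SemiconjBy
  rw [Algebra.TensorProduct.tmul_mul_tmul, Algebra.TensorProduct.tmul_mul_tmul,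
    one_mul, mul_one, h]

private lemma osp_aux_right {A : Type*} [Ring A] [Algebra ℚ A] {g y : A}
    (h : g*y = y*g) (x : A) :
    Commute ((1:A) ⊗ₜ[ℚ] g) (x ⊗ₜ[ℚ] y) := by
  unfold Commute SemiconjBy
  rw [Algebra.TensorProduct.tmul_mul_tmul, Algebra.TensorProduct.tmul_mul_tmul,
    one_mul, mul_one, h]

/-- The intermediate Casimir `Γ12` in `A ⊗[ℚ] A` commutes with `Γ ⊗ 1` and `1 ⊗ Γ`,
where `Γ` is the Casimir element of the `osp(1,2)`-realization in `A`. -/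
theorem intermediate_casimir_commutes_with_factors {A : Type*} [Ring A] [Algebra ℚ A]
    (J0 Jp Jm P : A)
    (h1 : J0*Jp - Jp*J0 = Jp)
    (h2 : J0*Jm - Jm*J0 = -Jm)
    (h3 : Jp*Jm + Jm*Jp = 2*J0)
    (h4 : J0*P = P*J0)
    (h5 : Jp*P + P*Jp = 0)
    (h6 : Jm*P + P*Jm = 0)
    (h7 : P^2 = 1) :
    let Γ : A := J0*P - Jp*Jm*P - (1/2 : ℚ) • P
    let ΔJ0 : A ⊗[ℚ] A := J0 ⊗ₜ 1 + 1 ⊗ₜ J0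
    let ΔJp : A ⊗[ℚ] A := Jp ⊗ₜ P + 1 ⊗ₜ Jp
    let ΔJm : A ⊗[ℚ] A := Jm ⊗ₜ P + 1 ⊗ₜ Jm
    let ΔP : A ⊗[ℚ] A := P ⊗ₜ P
    let Γ12 : A ⊗[ℚ] A := ΔJ0*ΔP - ΔJp*ΔJm*ΔP - (1/2 : ℚ) • ΔP
    Γ12 * (Γ ⊗ₜ (1:A)) = (Γ ⊗ₜ (1:A)) * Γ12 ∧
    Γ12 * ((1:A) ⊗ₜ Γ) = ((1:A) ⊗ₜ Γ) * Γ12 := by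
  intro Γ ΔJ0 ΔJp ΔJm ΔP Γ12
  obtain ⟨cJp, cJm, cJ0, cP⟩ := osp_casimir_central J0 Jp Jm P h1 h2 h3 h4 h5 h6 h7
  have c1 : (J0*P - Jp*Jm*P - (1/2 : ℚ) • P) * (1:A)
      = (1:A) * (J0*P - Jp*Jm*P - (1/2 : ℚ) • P) := by rw [mul_one, one_mul]
  -- left factor
  have L0 : Commute (Γ ⊗ₜ[ℚ] (1:A)) ΔJ0 := (osp_aux_left cJ0 1).add_right (osp_aux_left c1 J0)
  have Lp : Commute (Γ ⊗ₜ[ℚ] (1:A)) ΔJp := (osp_aux_left cJp P).add_right (osp_aux_left c1 Jp)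
  have Lm : Commute (Γ ⊗ₜ[ℚ] (1:A)) ΔJm := (osp_aux_left cJm P).add_right (osp_aux_left c1 Jm)
  have LP : Commute (Γ ⊗ₜ[ℚ] (1:A)) ΔP := osp_aux_left cP P
  have L : Commute (Γ ⊗ₜ[ℚ] (1:A)) Γ12 :=
    ((L0.mul_right LP).sub_right ((Lp.mul_right Lm).mul_right LP)).sub_right
      (LP.smul_right (1/2 : ℚ))
  -- right factor
  have R0 : Commute ((1:A) ⊗ₜ[ℚ] Γ) ΔJ0 := (osp_aux_right c1 J0).add_right (osp_aux_right cJ0 1)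
  have Rp : Commute ((1:A) ⊗ₜ[ℚ] Γ) ΔJp := (osp_aux_right cP Jp).add_right (osp_aux_right cJp 1)
  have Rm : Commute ((1:A) ⊗ₜ[ℚ] Γ) ΔJm := (osp_aux_right cP Jm).add_right (osp_aux_right cJm 1)
  have RP : Commute ((1:A) ⊗ₜ[ℚ] Γ) ΔP := osp_aux_right cP P
  have R : Commute ((1:A) ⊗ₜ[ℚ] Γ) Γ12 :=
    ((R0.mul_right RP).sub_right ((Rp.mul_right Rm).mul_right RP)).sub_right
      (RP.smul_right (1/2 : ℚ))
  exact ⟨L.eq.symm, R.eq.symm⟩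
end

section
/- Let A be an associative unital ℚ-algebra and let (J0, Jp, Jm, P) be an osp(1,2)-realization in A. In A ⊗ A ⊗ A, with the intermediate Casimirs Γ_S for subsets S of {1,2,3} as defined in the context, each single-index Casimir Γ_i (i = 1, 2, 3) commutes with each two-index Casimir Γ_{j,k} (for every two-element subset {j,k} of {1,2,3}). -/
open scoped TensorProduct

/-!
Write `Q = J0 - Jp Jm - 1/2` for the sCasimir. The relations make `Q` commute with `J0` and `P` and
anticommute with `Jp` and `Jm`; since `P` likewise anticommutes with `Jp` and `Jm`, the Casimir
`C = Q P` commutes with all four generators. Each `Γ_i` is `C` placed in slot `i`, while each `Γ_jk`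
is a polynomial in pure tensors whose slot-`i` factor is `1` or a generator, so the two commute.
-/

section OspCasimir
variable {R : Type*} [Ring R] [Algebra ℚ R]

def ospCasimir (j0 jp jm p : R) : R := j0 * p - jp * jm * p - (1 / 2 : ℚ) • p

def sCasimir (j0 jp jm : R) : R := j0 - jp * jm - (1 / 2 : ℚ) • 1

theorem ospCasimir_eq_sCasimir_mul (j0 jp jm p : R) :
    ospCasimir j0 jp jm p = sCasimir j0 jp jm * p := by
  simp only [ospCasimir, sCasimir, sub_mul, smul_mul_assoc, one_mul]

theorem Commute.ospCasimir_right {z j0 jp jm p : R} (h0 : Commute z j0) (hp : Commute z jp)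
    (hm : Commute z jm) (hP : Commute z p) : Commute z (ospCasimir j0 jp jm p) :=
  ((h0.mul_right hP).sub_right ((hp.mul_right hm).mul_right hP)).sub_right (hP.smul_right _)

theorem AlgHom.map_ospCasimir {S : Type*} [Ring S] [Algebra ℚ S] (f : R →ₐ[ℚ] S)
    (j0 jp jm p : R) : f (ospCasimir j0 jp jm p) = ospCasimir (f j0) (f jp) (f jm) (f p) := by
  simp only [ospCasimir, map_sub, map_mul, map_smul]

theorem two_mul_algebraMap_half : (2 : R) * algebraMap ℚ R (1 / 2) = 1 := by
  rw [← map_ofNat (algebraMap ℚ R), ← map_mul]; norm_num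

variable {j0 jp jm p : R}

theorem sCasimir_mul_jp (h1 : j0 * jp - jp * j0 = jp) (h3 : jp * jm + jm * jp = 2 * j0) :
    sCasimir j0 jp jm * jp = -(jp * sCasimir j0 jp jm) := by
  simp only [sCasimir, Algebra.smul_def, mul_one]
  linear_combination (norm := noncomm_ring) h1 - jp * h3 + Algebra.commutes (1 / 2 : ℚ) jp
    - two_mul_algebraMap_half (R := R) * jp

theorem sCasimir_mul_jm (h2 : j0 * jm - jm * j0 = -jm) (h3 : jp * jm + jm * jp = 2 * j0) :
    sCasimir j0 jp jm * jm = -(jm * sCasimir j0 jp jm) := by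
  simp only [sCasimir, Algebra.smul_def, mul_one]
  linear_combination (norm := noncomm_ring) -h2 - h3 * jm + Algebra.commutes (1 / 2 : ℚ) jm
    - two_mul_algebraMap_half (R := R) * jm

theorem commute_sCasimir_j0 (h1 : j0 * jp - jp * j0 = jp) (h2 : j0 * jm - jm * j0 = -jm) :
    Commute (sCasimir j0 jp jm) j0 := by
  simp only [Commute, SemiconjBy, sCasimir, Algebra.smul_def, mul_one]
  linear_combination (norm := noncomm_ring) h1 * jm + jp * h2 - Algebra.commutes (1 / 2 : ℚ) j0

theorem commute_sCasimir_p (h4 : j0 * p = p * j0) (h5 : jp * p + p * jp = 0)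
    (h6 : jm * p + p * jm = 0) : Commute (sCasimir j0 jp jm) p := by
  simp only [Commute, SemiconjBy, sCasimir, Algebra.smul_def, mul_one]
  linear_combination (norm := noncomm_ring) h4 - jp * h6 + h5 * jm - Algebra.commutes (1 / 2 : ℚ) p

theorem commute_ospCasimir_j0 (h1 : j0 * jp - jp * j0 = jp) (h2 : j0 * jm - jm * j0 = -jm)
    (h4 : j0 * p = p * j0) : Commute (ospCasimir j0 jp jm p) j0 := by
  rw [ospCasimir_eq_sCasimir_mul]
  exact (commute_sCasimir_j0 h1 h2).mul_left (Commute.symm h4)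

theorem commute_ospCasimir_jp (h1 : j0 * jp - jp * j0 = jp) (h3 : jp * jm + jm * jp = 2 * j0)
    (h5 : jp * p + p * jp = 0) : Commute (ospCasimir j0 jp jm p) jp := by
  rw [ospCasimir_eq_sCasimir_mul, Commute, SemiconjBy]
  linear_combination (norm := noncomm_ring) sCasimir j0 jp jm * h5 - sCasimir_mul_jp h1 h3 * p

theorem commute_ospCasimir_jm (h2 : j0 * jm - jm * j0 = -jm) (h3 : jp * jm + jm * jp = 2 * j0)
    (h6 : jm * p + p * jm = 0) : Commute (ospCasimir j0 jp jm p) jm := by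
  rw [ospCasimir_eq_sCasimir_mul, Commute, SemiconjBy]
  linear_combination (norm := noncomm_ring) sCasimir j0 jp jm * h6 - sCasimir_mul_jm h2 h3 * p

theorem commute_ospCasimir_p (h4 : j0 * p = p * j0) (h5 : jp * p + p * jp = 0)
    (h6 : jm * p + p * jm = 0) : Commute (ospCasimir j0 jp jm p) p := by
  rw [ospCasimir_eq_sCasimir_mul]
  exact (commute_sCasimir_p h4 h5 h6).mul_left (Commute.refl p)

end OspCasimir

section TensorProduct
variable {A B : Type*} [Ring A] [Algebra ℚ A] [Ring B] [Algebra ℚ B]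

theorem ospCasimir_tmul_one (j0 jp jm p : A) :
    ospCasimir (j0 ⊗ₜ[ℚ] (1 : B)) (jp ⊗ₜ 1) (jm ⊗ₜ 1) (p ⊗ₜ 1) = ospCasimir j0 jp jm p ⊗ₜ 1 :=
  ((Algebra.TensorProduct.includeLeft (S := ℚ)).map_ospCasimir j0 jp jm p).symm

theorem ospCasimir_one_tmul (j0 jp jm p : B) :
    ospCasimir ((1 : A) ⊗ₜ[ℚ] j0) (1 ⊗ₜ jp) (1 ⊗ₜ jm) (1 ⊗ₜ p) = 1 ⊗ₜ ospCasimir j0 jp jm p :=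
  ((Algebra.TensorProduct.includeRight (R := ℚ) (A := A)).map_ospCasimir j0 jp jm p).symm

end TensorProduct
theorem single_casimirs_commute_general {A : Type*} [Ring A] [Algebra ℚ A]
    (J0 Jp Jm P : A)
    (h1 : J0*Jp - Jp*J0 = Jp)
    (h2 : J0*Jm - Jm*J0 = -Jm)
    (h3 : Jp*Jm + Jm*Jp = 2*J0)
    (h4 : J0*P = P*J0)
    (h5 : Jp*P + P*Jp = 0)
    (h6 : Jm*P + P*Jm = 0) :
    -- intermediate Casimir operators Γ_S in A ⊗ A ⊗ A for subsets S of {1,2,3}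
    let Γ1 : A ⊗[ℚ] (A ⊗[ℚ] A) :=
      (J0 ⊗ₜ[ℚ] ((1:A) ⊗ₜ[ℚ] (1:A))) * (P ⊗ₜ[ℚ] ((1:A) ⊗ₜ[ℚ] (1:A)))
        - (Jp ⊗ₜ[ℚ] ((1:A) ⊗ₜ[ℚ] (1:A))) * (Jm ⊗ₜ[ℚ] ((1:A) ⊗ₜ[ℚ] (1:A))) * (P ⊗ₜ[ℚ] ((1:A) ⊗ₜ[ℚ] (1:A)))
        - (1/2 : ℚ) • (P ⊗ₜ[ℚ] ((1:A) ⊗ₜ[ℚ] (1:A)))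
    let Γ2 : A ⊗[ℚ] (A ⊗[ℚ] A) :=
      ((1:A) ⊗ₜ[ℚ] (J0 ⊗ₜ[ℚ] (1:A))) * ((1:A) ⊗ₜ[ℚ] (P ⊗ₜ[ℚ] (1:A)))
        - ((1:A) ⊗ₜ[ℚ] (Jp ⊗ₜ[ℚ] (1:A))) * ((1:A) ⊗ₜ[ℚ] (Jm ⊗ₜ[ℚ] (1:A))) * ((1:A) ⊗ₜ[ℚ] (P ⊗ₜ[ℚ] (1:A)))
        - (1/2 : ℚ) • ((1:A) ⊗ₜ[ℚ] (P ⊗ₜ[ℚ] (1:A)))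
    let Γ3 : A ⊗[ℚ] (A ⊗[ℚ] A) :=
      ((1:A) ⊗ₜ[ℚ] ((1:A) ⊗ₜ J0)) * ((1:A) ⊗ₜ[ℚ] ((1:A) ⊗ₜ P))
        - ((1:A) ⊗ₜ[ℚ] ((1:A) ⊗ₜ Jp)) * ((1:A) ⊗ₜ[ℚ] ((1:A) ⊗ₜ Jm)) * ((1:A) ⊗ₜ[ℚ] ((1:A) ⊗ₜ P))
        - (1/2 : ℚ) • ((1:A) ⊗ₜ[ℚ] ((1:A) ⊗ₜ P))
    let Γ12 : A ⊗[ℚ] (A ⊗[ℚ] A) :=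
      (J0 ⊗ₜ[ℚ] ((1:A) ⊗ₜ[ℚ] (1:A)) + (1:A) ⊗ₜ[ℚ] (J0 ⊗ₜ[ℚ] (1:A))) * (P ⊗ₜ[ℚ] (P ⊗ₜ[ℚ] (1:A)))
        - (Jp ⊗ₜ[ℚ] (P ⊗ₜ[ℚ] (1:A)) + (1:A) ⊗ₜ[ℚ] (Jp ⊗ₜ[ℚ] (1:A)))
            * (Jm ⊗ₜ[ℚ] (P ⊗ₜ[ℚ] (1:A)) + (1:A) ⊗ₜ[ℚ] (Jm ⊗ₜ[ℚ] (1:A))) * (P ⊗ₜ[ℚ] (P ⊗ₜ[ℚ] (1:A)))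
        - (1/2 : ℚ) • (P ⊗ₜ[ℚ] (P ⊗ₜ[ℚ] (1:A)))
    let Γ13 : A ⊗[ℚ] (A ⊗[ℚ] A) :=
      (J0 ⊗ₜ[ℚ] ((1:A) ⊗ₜ[ℚ] (1:A)) + (1:A) ⊗ₜ[ℚ] ((1:A) ⊗ₜ J0)) * (P ⊗ₜ[ℚ] ((1:A) ⊗ₜ P))
        - (Jp ⊗ₜ[ℚ] (P ⊗ₜ P) + (1:A) ⊗ₜ[ℚ] ((1:A) ⊗ₜ Jp))
            * (Jm ⊗ₜ[ℚ] (P ⊗ₜ P) + (1:A) ⊗ₜ[ℚ] ((1:A) ⊗ₜ Jm)) * (P ⊗ₜ[ℚ] ((1:A) ⊗ₜ P))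
        - (1/2 : ℚ) • (P ⊗ₜ[ℚ] ((1:A) ⊗ₜ P))
    let Γ23 : A ⊗[ℚ] (A ⊗[ℚ] A) :=
      ((1:A) ⊗ₜ[ℚ] (J0 ⊗ₜ[ℚ] (1:A)) + (1:A) ⊗ₜ[ℚ] ((1:A) ⊗ₜ J0)) * ((1:A) ⊗ₜ[ℚ] (P ⊗ₜ P))
        - ((1:A) ⊗ₜ[ℚ] (Jp ⊗ₜ P) + (1:A) ⊗ₜ[ℚ] ((1:A) ⊗ₜ Jp))
            * ((1:A) ⊗ₜ[ℚ] (Jm ⊗ₜ P) + (1:A) ⊗ₜ[ℚ] ((1:A) ⊗ₜ Jm)) * ((1:A) ⊗ₜ[ℚ] (P ⊗ₜ P))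
        - (1/2 : ℚ) • ((1:A) ⊗ₜ[ℚ] (P ⊗ₜ P))
    let Γ123 : A ⊗[ℚ] (A ⊗[ℚ] A) :=
      (J0 ⊗ₜ[ℚ] ((1:A) ⊗ₜ[ℚ] (1:A)) + (1:A) ⊗ₜ[ℚ] (J0 ⊗ₜ[ℚ] (1:A)) + (1:A) ⊗ₜ[ℚ] ((1:A) ⊗ₜ J0))
          * (P ⊗ₜ[ℚ] (P ⊗ₜ P))
        - (Jp ⊗ₜ[ℚ] (P ⊗ₜ P) + (1:A) ⊗ₜ[ℚ] (Jp ⊗ₜ P) + (1:A) ⊗ₜ[ℚ] ((1:A) ⊗ₜ Jp))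
            * (Jm ⊗ₜ[ℚ] (P ⊗ₜ P) + (1:A) ⊗ₜ[ℚ] (Jm ⊗ₜ P) + (1:A) ⊗ₜ[ℚ] ((1:A) ⊗ₜ Jm))
            * (P ⊗ₜ[ℚ] (P ⊗ₜ P))
        - (1/2 : ℚ) • (P ⊗ₜ[ℚ] (P ⊗ₜ P))
    (Γ1*Γ12 = Γ12*Γ1 ∧ Γ1*Γ13 = Γ13*Γ1 ∧ Γ1*Γ23 = Γ23*Γ1) ∧ (Γ2*Γ12 = Γ12*Γ2 ∧ Γ2*Γ13 = Γ13*Γ2 ∧ Γ2*Γ23 = Γ23*Γ2) ∧ (Γ3*Γ12 = Γ12*Γ3 ∧ Γ3*Γ13 = Γ13*Γ3 ∧ Γ3*Γ23 = Γ23*Γ3) := by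
  intro Γ1 Γ2 Γ3 Γ12 Γ13 Γ23 _
  set x := ospCasimir J0 Jp Jm P
  have c0 : Commute x J0 := commute_ospCasimir_j0 h1 h2 h4
  have cp : Commute x Jp := commute_ospCasimir_jp h1 h3 h5
  have cm : Commute x Jm := commute_ospCasimir_jm h2 h3 h6
  have cP : Commute x P := commute_ospCasimir_p h4 h5 h6
  have e1 : Γ1 = x ⊗ₜ[ℚ] ((1 : A) ⊗ₜ[ℚ] (1 : A)) := ospCasimir_tmul_one J0 Jp Jm P
  have e2 : Γ2 = (1 : A) ⊗ₜ[ℚ] (x ⊗ₜ[ℚ] (1 : A)) := by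
    rw [← ospCasimir_tmul_one, ← ospCasimir_one_tmul]; rfl
  have e3 : Γ3 = (1 : A) ⊗ₜ[ℚ] ((1 : A) ⊗ₜ[ℚ] x) := by
    rw [← ospCasimir_one_tmul, ← ospCasimir_one_tmul]; rfl
  refine ⟨⟨?_, ?_, ?_⟩, ⟨?_, ?_, ?_⟩, ⟨?_, ?_, ?_⟩⟩ <;> first | rw [e1] | rw [e2] | rw [e3]
  -- Split `Γ_jk` into pure tensors, then compare them slot by slot.
  all_goals
    refine (Commute.ospCasimir_right ?_ ?_ ?_ ?_).eq
    all_goals repeat' first | apply Commute.add_right | apply Commute.tmul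
    all_goals first | assumption | exact Commute.one_left _ | exact Commute.one_right _

/-- Each single-index Casimir Γi (i = 1,2,3) commutes with each two-index Casimir Γjk. -/
theorem single_casimirs_commute {A : Type*} [Ring A] [Algebra ℚ A]
    (J0 Jp Jm P : A)
    (h1 : J0*Jp - Jp*J0 = Jp)
    (h2 : J0*Jm - Jm*J0 = -Jm)
    (h3 : Jp*Jm + Jm*Jp = 2*J0)
    (h4 : J0*P = P*J0)
    (h5 : Jp*P + P*Jp = 0)
    (h6 : Jm*P + P*Jm = 0)
    (h7 : P^2 = 1) :
    -- intermediate Casimir operators Γ_S in A ⊗ A ⊗ A for subsets S of {1,2,3}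
    let Γ1 : A ⊗[ℚ] (A ⊗[ℚ] A) :=
      (J0 ⊗ₜ[ℚ] ((1:A) ⊗ₜ[ℚ] (1:A))) * (P ⊗ₜ[ℚ] ((1:A) ⊗ₜ[ℚ] (1:A)))
        - (Jp ⊗ₜ[ℚ] ((1:A) ⊗ₜ[ℚ] (1:A))) * (Jm ⊗ₜ[ℚ] ((1:A) ⊗ₜ[ℚ] (1:A))) * (P ⊗ₜ[ℚ] ((1:A) ⊗ₜ[ℚ] (1:A)))
        - (1/2 : ℚ) • (P ⊗ₜ[ℚ] ((1:A) ⊗ₜ[ℚ] (1:A)))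
    let Γ2 : A ⊗[ℚ] (A ⊗[ℚ] A) :=
      ((1:A) ⊗ₜ[ℚ] (J0 ⊗ₜ[ℚ] (1:A))) * ((1:A) ⊗ₜ[ℚ] (P ⊗ₜ[ℚ] (1:A)))
        - ((1:A) ⊗ₜ[ℚ] (Jp ⊗ₜ[ℚ] (1:A))) * ((1:A) ⊗ₜ[ℚ] (Jm ⊗ₜ[ℚ] (1:A))) * ((1:A) ⊗ₜ[ℚ] (P ⊗ₜ[ℚ] (1:A)))
        - (1/2 : ℚ) • ((1:A) ⊗ₜ[ℚ] (P ⊗ₜ[ℚ] (1:A)))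
    let Γ3 : A ⊗[ℚ] (A ⊗[ℚ] A) :=
      ((1:A) ⊗ₜ[ℚ] ((1:A) ⊗ₜ J0)) * ((1:A) ⊗ₜ[ℚ] ((1:A) ⊗ₜ P))
        - ((1:A) ⊗ₜ[ℚ] ((1:A) ⊗ₜ Jp)) * ((1:A) ⊗ₜ[ℚ] ((1:A) ⊗ₜ Jm)) * ((1:A) ⊗ₜ[ℚ] ((1:A) ⊗ₜ P))
        - (1/2 : ℚ) • ((1:A) ⊗ₜ[ℚ] ((1:A) ⊗ₜ P))
    let Γ12 : A ⊗[ℚ] (A ⊗[ℚ] A) :=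
      (J0 ⊗ₜ[ℚ] ((1:A) ⊗ₜ[ℚ] (1:A)) + (1:A) ⊗ₜ[ℚ] (J0 ⊗ₜ[ℚ] (1:A))) * (P ⊗ₜ[ℚ] (P ⊗ₜ[ℚ] (1:A)))
        - (Jp ⊗ₜ[ℚ] (P ⊗ₜ[ℚ] (1:A)) + (1:A) ⊗ₜ[ℚ] (Jp ⊗ₜ[ℚ] (1:A)))
            * (Jm ⊗ₜ[ℚ] (P ⊗ₜ[ℚ] (1:A)) + (1:A) ⊗ₜ[ℚ] (Jm ⊗ₜ[ℚ] (1:A))) * (P ⊗ₜ[ℚ] (P ⊗ₜ[ℚ] (1:A)))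
        - (1/2 : ℚ) • (P ⊗ₜ[ℚ] (P ⊗ₜ[ℚ] (1:A)))
    let Γ13 : A ⊗[ℚ] (A ⊗[ℚ] A) :=
      (J0 ⊗ₜ[ℚ] ((1:A) ⊗ₜ[ℚ] (1:A)) + (1:A) ⊗ₜ[ℚ] ((1:A) ⊗ₜ J0)) * (P ⊗ₜ[ℚ] ((1:A) ⊗ₜ P))
        - (Jp ⊗ₜ[ℚ] (P ⊗ₜ P) + (1:A) ⊗ₜ[ℚ] ((1:A) ⊗ₜ Jp))
            * (Jm ⊗ₜ[ℚ] (P ⊗ₜ P) + (1:A) ⊗ₜ[ℚ] ((1:A) ⊗ₜ Jm)) * (P ⊗ₜ[ℚ] ((1:A) ⊗ₜ P))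
        - (1/2 : ℚ) • (P ⊗ₜ[ℚ] ((1:A) ⊗ₜ P))
    let Γ23 : A ⊗[ℚ] (A ⊗[ℚ] A) :=
      ((1:A) ⊗ₜ[ℚ] (J0 ⊗ₜ[ℚ] (1:A)) + (1:A) ⊗ₜ[ℚ] ((1:A) ⊗ₜ J0)) * ((1:A) ⊗ₜ[ℚ] (P ⊗ₜ P))
        - ((1:A) ⊗ₜ[ℚ] (Jp ⊗ₜ P) + (1:A) ⊗ₜ[ℚ] ((1:A) ⊗ₜ Jp))
            * ((1:A) ⊗ₜ[ℚ] (Jm ⊗ₜ P) + (1:A) ⊗ₜ[ℚ] ((1:A) ⊗ₜ Jm)) * ((1:A) ⊗ₜ[ℚ] (P ⊗ₜ P))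
        - (1/2 : ℚ) • ((1:A) ⊗ₜ[ℚ] (P ⊗ₜ P))
    let Γ123 : A ⊗[ℚ] (A ⊗[ℚ] A) :=
      (J0 ⊗ₜ[ℚ] ((1:A) ⊗ₜ[ℚ] (1:A)) + (1:A) ⊗ₜ[ℚ] (J0 ⊗ₜ[ℚ] (1:A)) + (1:A) ⊗ₜ[ℚ] ((1:A) ⊗ₜ J0))
          * (P ⊗ₜ[ℚ] (P ⊗ₜ P))
        - (Jp ⊗ₜ[ℚ] (P ⊗ₜ P) + (1:A) ⊗ₜ[ℚ] (Jp ⊗ₜ P) + (1:A) ⊗ₜ[ℚ] ((1:A) ⊗ₜ Jp))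
            * (Jm ⊗ₜ[ℚ] (P ⊗ₜ P) + (1:A) ⊗ₜ[ℚ] (Jm ⊗ₜ P) + (1:A) ⊗ₜ[ℚ] ((1:A) ⊗ₜ Jm))
            * (P ⊗ₜ[ℚ] (P ⊗ₜ P))
        - (1/2 : ℚ) • (P ⊗ₜ[ℚ] (P ⊗ₜ P))
    (Γ1*Γ12 = Γ12*Γ1 ∧ Γ1*Γ13 = Γ13*Γ1 ∧ Γ1*Γ23 = Γ23*Γ1) ∧ (Γ2*Γ12 = Γ12*Γ2 ∧ Γ2*Γ13 = Γ13*Γ2 ∧ Γ2*Γ23 = Γ23*Γ2) ∧ (Γ3*Γ12 = Γ12*Γ3 ∧ Γ3*Γ13 = Γ13*Γ3 ∧ Γ3*Γ23 = Γ23*Γ3) :=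
  single_casimirs_commute_general J0 Jp Jm P h1 h2 h3 h4 h5 h6
end

section
/- Let n ≥ 1, let A be an associative unital ℚ-algebra and let (J0, Jp, Jm, P) be an osp(1,2)-realization in A. For every nonempty subset S of {1,…,n}, the elements J0^S, Jp^S, Jm^S, P^S of the n-fold tensor power A^{⊗n} (as defined in the context) form an osp(1,2)-realization in A^{⊗n}, i.e. they satisfy all seven osp(1,2) relations. -/
open scoped TensorProduct
open PiTensorProduct


section helpers
variable {A : Type*} [Ring A] [Algebra ℚ A] {n : ℕ}

lemma tprod_sub_single (f g : Fin n → A) (i : Fin n) (h : ∀ j, j ≠ i → f j = g j) :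
    tprod ℚ f - tprod ℚ g = tprod ℚ (Function.update g i (f i - g i)) := by
  have hf : f = Function.update g i (f i) := by
    funext j
    by_cases hj : j = i
    · subst hj; simp
    · simp [Function.update_of_ne hj, h j hj]
  have hg : g = Function.update g i (g i) := (Function.update_eq_self i g).symm
  rw [hf]
  nth_rewrite 2 [hg]
  simp only [Function.update_self]
  exact (MultilinearMap.map_update_sub (PiTensorProduct.tprod ℚ) g i (f i) (g i)).symm

lemma tprod_add_neg (f g : Fin n → A) (i : Fin n) (h : ∀ j, j ≠ i → f j = g j)
    (hi : f i = - g i) : tprod ℚ f + tprod ℚ g = 0 := by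
  have hf : f = Function.update g i (-(g i)) := by
    funext j
    by_cases hj : j = i
    · subst hj; simpa using hi
    · simp [Function.update_of_ne hj, h j hj]
  rw [hf, MultilinearMap.map_update_neg, Function.update_eq_self]
  exact neg_add_cancel _

lemma comm_sum (S : Finset (Fin n)) (F G : Fin n → (Fin n → A))
    (hoff : ∀ i ∈ S, ∀ i' ∈ S, i ≠ i' →
      tprod ℚ (F i * G i') - tprod ℚ (G i' * F i) = 0) :
    (∑ i ∈ S, tprod ℚ (F i)) * (∑ i ∈ S, tprod ℚ (G i)) -
      (∑ i ∈ S, tprod ℚ (G i)) * (∑ i ∈ S, tprod ℚ (F i)) =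
    ∑ i ∈ S, (tprod ℚ (F i * G i) - tprod ℚ (G i * F i)) := by
  rw [Finset.sum_mul_sum, Finset.sum_mul_sum]
  simp_rw [tprod_mul_tprod]
  rw [Finset.sum_comm (s := S) (t := S) (f := fun i i' => tprod ℚ (G i * F i'))]
  rw [← Finset.sum_sub_distrib]
  refine Finset.sum_congr rfl fun i hi => ?_
  rw [← Finset.sum_sub_distrib]
  exact Finset.sum_eq_single_of_mem i hi fun i' hi' hne => hoff i hi i' hi' (Ne.symm hne)

lemma acomm_sum (S : Finset (Fin n)) (F G : Fin n → (Fin n → A))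
    (hoff : ∀ i ∈ S, ∀ i' ∈ S, i ≠ i' →
      tprod ℚ (F i * G i') + tprod ℚ (G i' * F i) = 0) :
    (∑ i ∈ S, tprod ℚ (F i)) * (∑ i ∈ S, tprod ℚ (G i)) +
      (∑ i ∈ S, tprod ℚ (G i)) * (∑ i ∈ S, tprod ℚ (F i)) =
    ∑ i ∈ S, (tprod ℚ (F i * G i) + tprod ℚ (G i * F i)) := by
  rw [Finset.sum_mul_sum, Finset.sum_mul_sum]
  simp_rw [tprod_mul_tprod]
  rw [Finset.sum_comm (s := S) (t := S) (f := fun i i' => tprod ℚ (G i * F i'))]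
  rw [← Finset.sum_add_distrib]
  refine Finset.sum_congr rfl fun i hi => ?_
  rw [← Finset.sum_add_distrib]
  exact Finset.sum_eq_single_of_mem i hi fun i' hi' hne => hoff i hi i' hi' (Ne.symm hne)

end helpers

/-- `J0^S`: the sum over `i ∈ S` of the pure tensor with `J0` in slot `i`
and `1` in all other slots of the `n`-fold tensor power `A^{⊗n}`. -/
noncomputable def J0pow {A : Type*} [Ring A] [Algebra ℚ A] {n : ℕ} (J0 : A)
    (S : Finset (Fin n)) : ⨂[ℚ] _ : Fin n, A :=
  ∑ i ∈ S, tprod ℚ (fun j => if j = i then J0 else 1)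

/-- `P^S`: the pure tensor with `P` in each slot belonging to `S` and `1` elsewhere. -/
noncomputable def Ppow {A : Type*} [Ring A] [Algebra ℚ A] {n : ℕ} (P : A)
    (S : Finset (Fin n)) : ⨂[ℚ] _ : Fin n, A :=
  tprod ℚ (fun j => if j ∈ S then P else 1)

/-- `J±^S`: the sum over `i ∈ S` of the pure tensor with `J±` in slot `i`,
`P` in every slot `j` with `i < j ≤ max S`, and `1` elsewhere. -/
noncomputable def Jpmpow {A : Type*} [Ring A] [Algebra ℚ A] {n : ℕ} (Jpm P : A)
    (S : Finset (Fin n)) : ⨂[ℚ] _ : Fin n, A :=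
  ∑ i ∈ S, tprod ℚ (fun j =>
    if j = i then Jpm else if i < j ∧ ∃ k ∈ S, j ≤ k then P else 1)

section rels
variable {A : Type*} [Ring A] [Algebra ℚ A] {n : ℕ}

lemma rel1gen (J0 Jx K P : A) (hx : J0*Jx - Jx*J0 = K) (h4 : J0*P = P*J0)
    (S : Finset (Fin n)) :
    J0pow J0 S * Jpmpow Jx P S - Jpmpow Jx P S * J0pow J0 S =
      ∑ i ∈ S, tprod ℚ (fun j =>
        if j = i then K else if i < j ∧ ∃ k ∈ S, j ≤ k then P else 1) := by
  unfold J0pow Jpmpow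
  refine (comm_sum S (fun i j => if j = i then J0 else 1)
    (fun i j => if j = i then Jx else if i < j ∧ ∃ k ∈ S, j ≤ k then P else 1)
    ?_).trans ?_
  · intro i hi i' hi' hne
    refine sub_eq_zero_of_eq (congrArg _ (funext fun j => ?_))
    simp only [Pi.mul_apply]
    by_cases hji : j = i
    · subst hji
      rw [if_pos rfl, if_neg hne]
      split_ifs with hc
      · exact h4
      · simp
    · rw [if_neg hji]
      simp
  · refine Finset.sum_congr rfl fun i hi => ?_
    rw [tprod_sub_single _ _ i (fun j hj => by simp [Pi.mul_apply, if_neg hj])]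
    refine congrArg _ (funext fun j => ?_)
    by_cases hj : j = i
    · subst hj
      simpa using hx
    · simp [Function.update_of_ne hj, Pi.mul_apply, if_neg hj]

lemma tprod_add_single (f g : Fin n → A) (i : Fin n) (h : ∀ j, j ≠ i → f j = g j) :
    tprod ℚ f + tprod ℚ g = tprod ℚ (Function.update g i (f i + g i)) := by
  have hf : f = Function.update g i (f i) := by
    funext j
    by_cases hj : j = i
    · subst hj; simp
    · simp [Function.update_of_ne hj, h j hj]
  have hg : g = Function.update g i (g i) := (Function.update_eq_self i g).symm
  rw [hf]
  nth_rewrite 2 [hg]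
  simp only [Function.update_self]
  exact ((PiTensorProduct.tprod ℚ).map_update_add g i (f i) (g i)).symm

lemma rel5gen (Jx P : A) (hx : Jx*P = -(P*Jx)) (S : Finset (Fin n)) :
    Jpmpow Jx P S * Ppow P S + Ppow P S * Jpmpow Jx P S = 0 := by
  unfold Jpmpow Ppow
  rw [Finset.sum_mul, Finset.mul_sum, ← Finset.sum_add_distrib]
  refine Finset.sum_eq_zero fun i hi => ?_
  rw [tprod_mul_tprod, tprod_mul_tprod]
  refine tprod_add_neg _ _ i (fun j hj => ?_) ?_
  · simp only [Pi.mul_apply, if_neg hj]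
    split_ifs <;> simp
  · simp only [Pi.mul_apply, eq_self_iff_true, if_true, if_pos hi]
    rw [hx]

lemma rel3gen (Jp Jm J0 P : A) (h3 : Jp*Jm + Jm*Jp = 2*J0)
    (h5 : Jp*P + P*Jp = 0) (h6 : Jm*P + P*Jm = 0) (hPP : P*P = 1)
    (S : Finset (Fin n)) :
    Jpmpow Jp P S * Jpmpow Jm P S + Jpmpow Jm P S * Jpmpow Jp P S =
      2 * J0pow J0 S := by
  have h5' : Jp * P = -(P * Jp) := eq_neg_of_add_eq_zero_left h5
  have h6' : P * Jm = -(Jm * P) := eq_neg_of_add_eq_zero_right h6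
  unfold Jpmpow J0pow
  refine (acomm_sum S
    (fun i j => if j = i then Jp else if i < j ∧ ∃ k ∈ S, j ≤ k then P else 1)
    (fun i j => if j = i then Jm else if i < j ∧ ∃ k ∈ S, j ≤ k then P else 1)
    ?_).trans ?_
  · intro i hi i' hi' hne
    rcases lt_or_gt_of_ne hne with hlt | hlt
    · -- i < i' : sign flip at slot i'
      refine tprod_add_neg _ _ i' (fun j hj => ?_) ?_
      · simp only [Pi.mul_apply]
        by_cases hji : j = i
        · subst hji
          rw [if_neg hj, if_neg (show ¬(i' < j ∧ ∃ k ∈ S, j ≤ k) from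
            fun hc => absurd hc.1 (not_lt.2 hlt.le))]
          simp
        · rw [if_neg hji, if_neg hj]
          split_ifs <;> simp
      · simp only [Pi.mul_apply, eq_self_iff_true, if_true]
        rw [if_neg (show ¬ (i' : Fin n) = i from fun h => hne h.symm),
          if_pos ⟨hlt, i', hi', le_refl i'⟩, h6']
    · -- i' < i : sign flip at slot i
      refine tprod_add_neg _ _ i (fun j hj => ?_) ?_
      · simp only [Pi.mul_apply]
        by_cases hji : j = i'
        · subst hji
          rw [if_neg hj, if_neg (show ¬(i < j ∧ ∃ k ∈ S, j ≤ k) from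
            fun hc => absurd hc.1 (not_lt.2 hlt.le))]
          simp
        · rw [if_neg hj, if_neg hji]
          split_ifs <;> simp
      · simp only [Pi.mul_apply, eq_self_iff_true, if_true]
        rw [if_neg (show ¬ (i : Fin n) = i' from hne),
          if_pos ⟨hlt, i, hi, le_refl i⟩, h5']
  · refine Eq.trans ?_ (by rw [two_mul, ← Finset.sum_add_distrib])
    refine Finset.sum_congr rfl fun i hi => ?_
    rw [tprod_add_single _ _ i (fun j hj => by
      simp only [Pi.mul_apply, if_neg hj])]
    have hupd : Function.update
        ((fun j => if j = i then Jm else if i < j ∧ ∃ k ∈ S, j ≤ k then P else 1) *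
         (fun j => if j = i then Jp else if i < j ∧ ∃ k ∈ S, j ≤ k then P else 1)) i
        (((fun j => if j = i then Jp else if i < j ∧ ∃ k ∈ S, j ≤ k then P else 1) *
          (fun j => if j = i then Jm else if i < j ∧ ∃ k ∈ S, j ≤ k then P else 1)) i +
         ((fun j => if j = i then Jm else if i < j ∧ ∃ k ∈ S, j ≤ k then P else 1) *
          (fun j => if j = i then Jp else if i < j ∧ ∃ k ∈ S, j ≤ k then P else 1)) i)
        = Function.update (fun j => if j = i then J0 else (1:A)) i (J0 + J0) := by
      funext j
      by_cases hj : j = i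
      · subst hj
        simp only [Function.update_self, Pi.mul_apply, eq_self_iff_true, if_true]
        rw [h3, two_mul]
      · simp only [Function.update_of_ne hj, Pi.mul_apply, if_neg hj]
        split_ifs <;> simp [hPP]
    rw [hupd, (PiTensorProduct.tprod ℚ).map_update_add]
    have : Function.update (fun j => if j = i then J0 else (1:A)) i J0 =
        fun j => if j = i then J0 else (1:A) := by
      funext j
      by_cases hj : j = i
      · subst hj; simp
      · simp [Function.update_of_ne hj]
    rw [this]

lemma rel4gen (J0 P : A) (h4 : J0*P = P*J0) (S : Finset (Fin n)) :
    J0pow J0 S * Ppow P S = Ppow P S * J0pow J0 S := by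
  unfold J0pow Ppow
  rw [Finset.sum_mul, Finset.mul_sum]
  refine Finset.sum_congr rfl fun i hi => ?_
  rw [tprod_mul_tprod, tprod_mul_tprod]
  refine congrArg _ (funext fun j => ?_)
  simp only [Pi.mul_apply]
  by_cases hj : j = i
  · subst hj
    simp only [eq_self_iff_true, if_true, if_pos hi]
    exact h4
  · rw [if_neg hj]
    split_ifs <;> simp

lemma rel7gen (P : A) (hPP : P*P = 1) (S : Finset (Fin n)) :
    (Ppow P S)^2 = 1 := by
  rw [sq]
  unfold Ppow
  rw [tprod_mul_tprod, PiTensorProduct.one_def]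
  refine congrArg _ (funext fun j => ?_)
  simp only [Pi.mul_apply, Pi.one_apply]
  split_ifs <;> simp [hPP]

end rels

/-- For every nonempty subset `S` of `{1,…,n}`, the elements `J0^S, Jp^S, Jm^S, P^S`
of `A^{⊗n}` form an `osp(1,2)`-realization. -/
theorem subset_realization {A : Type*} [Ring A] [Algebra ℚ A] {n : ℕ} (hn : 1 ≤ n)
    (J0 Jp Jm P : A)
    (h1 : J0*Jp - Jp*J0 = Jp)
    (h2 : J0*Jm - Jm*J0 = -Jm)
    (h3 : Jp*Jm + Jm*Jp = 2*J0)
    (h4 : J0*P = P*J0)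
    (h5 : Jp*P + P*Jp = 0)
    (h6 : Jm*P + P*Jm = 0)
    (h7 : P^2 = 1)
    (S : Finset (Fin n)) (hS : S.Nonempty) :
    let J0' := J0pow J0 S
    let Jp' := Jpmpow Jp P S
    let Jm' := Jpmpow Jm P S
    let P' := Ppow P S
    J0'*Jp' - Jp'*J0' = Jp' ∧ J0'*Jm' - Jm'*J0' = -Jm' ∧
    Jp'*Jm' + Jm'*Jp' = 2*J0' ∧ J0'*P' = P'*J0' ∧
    Jp'*P' + P'*Jp' = 0 ∧ Jm'*P' + P'*Jm' = 0 ∧ P'^2 = 1 := by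
  
  intro J0' Jp' Jm' P'
  have hPP : P * P = 1 := by rw [← sq]; exact h7
  have h5' : Jp * P = -(P * Jp) := eq_neg_of_add_eq_zero_left h5
  have h6' : Jm * P = -(P * Jm) := eq_neg_of_add_eq_zero_left h6
  refine ⟨rel1gen J0 Jp Jp P h1 h4 S, ?_, rel3gen Jp Jm J0 P h3 h5 h6 hPP S,
    rel4gen J0 P h4 S, rel5gen Jp P h5' S, rel5gen Jm P h6' S, rel7gen P hPP S⟩
  refine (rel1gen J0 Jm (-Jm) P h2 h4 S).trans ?_
  show _ = -Jpmpow Jm P S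
  unfold Jpmpow
  rw [← Finset.sum_neg_distrib]
  refine Finset.sum_congr rfl fun i hi => ?_
  refine eq_neg_of_add_eq_zero_left (tprod_add_neg _ _ i (fun j hj => ?_) ?_)
  · rw [if_neg hj, if_neg hj]
  · simp only [eq_self_iff_true, if_true]
end
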